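/- arXiv:1703.08234 — 2 statements merged into one kernel-verified Lean document; each statement's English description precedes it below -/
import Mathlib

section
/- With c_∞(t) = inf_{(ω_1,ω_2) ∈ P_2(Ω)} max{t/𝔯(ω_1), 1/𝔯(ω_2)}, one has c_∞(1) = 1/𝔕(Ω), where 𝔕(Ω) = sup{r > 0 : there exist two disjoint open balls of radius r contained in Ω}. Consequently the point (λ_{2,∞}, λ_{2,∞}) = (1/𝔕, 1/𝔕) lies on the curve C_{2,∞}. -/
open Set Metric

noncomputable def inradius {n : ℕ} (ω : Set (EuclideanSpace ℝ (Fin n))) : ℝ :=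
  sSup {r : ℝ | ∃ x, ball x r ⊆ ω}

def partitions2 {n : ℕ} (Ω : Set (EuclideanSpace ℝ (Fin n))) :
    Set (Set (EuclideanSpace ℝ (Fin n)) × Set (EuclideanSpace ℝ (Fin n))) :=
  {ω | IsOpen ω.1 ∧ IsOpen ω.2 ∧ IsConnected ω.1 ∧ IsConnected ω.2 ∧
    ω.1 ⊆ Ω ∧ ω.2 ⊆ Ω ∧ Disjoint ω.1 ω.2}

noncomputable def cInf {n : ℕ} (Ω : Set (EuclideanSpace ℝ (Fin n))) (t : ℝ) : ℝ :=
  sInf {x : ℝ | ∃ ω ∈ partitions2 Ω, x = max (t / inradius ω.1) (1 / inradius ω.2)}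

/-- `𝔕(Ω)`: the supremum of radii `r` such that two disjoint open balls of radius `r`
fit inside `Ω`. -/
noncomputable def twoBallRadius {n : ℕ} (Ω : Set (EuclideanSpace ℝ (Fin n))) : ℝ :=
  sSup {r : ℝ | 0 < r ∧ ∃ x y, ball x r ⊆ Ω ∧ ball y r ⊆ Ω ∧ Disjoint (ball x r) (ball y r)}

/-- In a nontrivial space, the set of radii of balls inside a bounded set is bounded above. -/
lemma aux_bdd {n : ℕ} [Nontrivial (EuclideanSpace ℝ (Fin n))]
    {Ω : Set (EuclideanSpace ℝ (Fin n))} (hΩb : Bornology.IsBounded Ω) :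
    BddAbove {r : ℝ | ∃ x, ball x r ⊆ Ω} := by
  obtain ⟨R, hR⟩ := hΩb.subset_closedBall 0
  refine ⟨4 * max R 0 + 1, ?_⟩
  rintro r ⟨x, hx⟩
  rcases le_or_gt r 0 with h | h
  · have := le_max_right R 0
    nlinarith
  · have hx0 : x ∈ ball x r := mem_ball_self h
    have hxR : ‖x‖ ≤ R := by simpa using hR (hx hx0)
    obtain ⟨v, hv⟩ := exists_norm_eq (EuclideanSpace ℝ (Fin n)) (le_of_lt (half_pos h))
    have hmem : x + v ∈ ball x r := by
      rw [mem_ball, dist_self_add_left, hv]; linarith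
    have h2 : ‖x + v‖ ≤ R := by simpa using hR (hx hmem)
    have h3 : ‖x + v - x‖ ≤ ‖x + v‖ + ‖x‖ := norm_sub_le _ _
    have h4 : ‖x + v - x‖ = r / 2 := by simpa using hv
    have := le_max_left R 0
    have := le_max_right R 0
    linarith

lemma aux_nonempty {n : ℕ} (ω : Set (EuclideanSpace ℝ (Fin n))) :
    {r : ℝ | ∃ x, ball x r ⊆ ω}.Nonempty := by
  refine ⟨-1, 0, ?_⟩
  rw [ball_eq_empty.2 (by norm_num)]
  exact empty_subset _

lemma exists_ball_of_lt_inradius {n : ℕ} {ω : Set (EuclideanSpace ℝ (Fin n))} {r : ℝ}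
    (hr : r < inradius ω) : ∃ x, ball x r ⊆ ω := by
  obtain ⟨s, ⟨x, hx⟩, hrs⟩ := exists_lt_of_lt_csSup (aux_nonempty ω) hr
  exact ⟨x, (ball_subset_ball hrs.le).trans hx⟩

/-- `c_∞(1) = 1/𝔕(Ω)`, hence the diagonal point `(λ_{2,∞}, λ_{2,∞}) = (1/𝔕, 1/𝔕)` lies on
the curve `C_{2,∞}` parametrized by `(t⁻¹ c_∞(t), c_∞(t))`. -/
theorem stmt_14 {n : ℕ} (Ω : Set (EuclideanSpace ℝ (Fin n)))
    (hΩo : IsOpen Ω) (hΩb : Bornology.IsBounded Ω) (hΩc : IsConnected Ω) :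
    cInf Ω 1 = 1 / twoBallRadius Ω ∧
    ∃ t : ℝ, 0 < t ∧
      ((t⁻¹ * cInf Ω t, cInf Ω t) : ℝ × ℝ)
        = (1 / twoBallRadius Ω, 1 / twoBallRadius Ω) := by
  suffices key : cInf Ω 1 = 1 / twoBallRadius Ω by
    exact ⟨key, 1, one_pos, by simp [key]⟩
  set T : Set ℝ :=
    {r : ℝ | 0 < r ∧ ∃ x y, ball x r ⊆ Ω ∧ ball y r ⊆ Ω ∧ Disjoint (ball x r) (ball y r)}
    with hT
  set P : Set ℝ :=
    {x : ℝ | ∃ ω ∈ partitions2 Ω, x = max ((1:ℝ) / inradius ω.1) (1 / inradius ω.2)} with hP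
  have hcInf : cInf Ω 1 = sInf P := rfl
  have h𝔕 : twoBallRadius Ω = sSup T := rfl
  rcases subsingleton_or_nontrivial (EuclideanSpace ℝ (Fin n)) with hsub | hnt
  · -- degenerate case: the space is a point; both sides are 0
    have hPe : P = (∅ : Set ℝ) := by
      rw [eq_empty_iff_forall_notMem]
      rintro x ⟨⟨ω1, ω2⟩, ⟨-, -, hc1, hc2, -, -, hd⟩, -⟩
      obtain ⟨a, ha⟩ := hc1.nonempty
      obtain ⟨b, hb⟩ := hc2.nonempty
      exact disjoint_left.1 hd ha (Subsingleton.elim a b ▸ hb)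
    have hTe : T = (∅ : Set ℝ) := by
      rw [eq_empty_iff_forall_notMem]
      intro r hr
      rw [hT, mem_setOf_eq] at hr
      obtain ⟨hr, x, y, -, -, hd⟩ := hr
      exact disjoint_left.1 hd (mem_ball_self hr)
        (Subsingleton.elim x y ▸ mem_ball_self hr)
    rw [hcInf, h𝔕, hPe, hTe, Real.sInf_empty, Real.sSup_empty]
    norm_num
  · -- main case
    have hbddΩ : BddAbove {r : ℝ | ∃ x, ball x r ⊆ Ω} := aux_bdd hΩb
    have hbdd_sub : ∀ ω : Set (EuclideanSpace ℝ (Fin n)), ω ⊆ Ω →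
        BddAbove {r : ℝ | ∃ x, ball x r ⊆ ω} := by
      intro ω hω
      refine hbddΩ.mono ?_
      rintro r ⟨x, hx⟩
      exact ⟨x, hx.trans hω⟩
    have hirpos : ∀ ω : Set (EuclideanSpace ℝ (Fin n)), ω ⊆ Ω → IsOpen ω → ω.Nonempty →
        0 < inradius ω := by
      rintro ω hω ho ⟨y, hy⟩
      obtain ⟨ε, hε, hball⟩ := Metric.isOpen_iff.1 ho y hy
      exact lt_of_lt_of_le hε (le_csSup (hbdd_sub ω hω) ⟨y, hball⟩)
    have hir_ge : ∀ (x : EuclideanSpace ℝ (Fin n)) (r : ℝ), ball x r ⊆ Ω →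
        r ≤ inradius (ball x r) := by
      intro x r hsub
      exact le_csSup (hbdd_sub _ hsub) ⟨x, subset_rfl⟩
    -- T is nonempty and bounded above
    have hT_bdd : BddAbove T := by
      refine hbddΩ.mono ?_
      rintro r ⟨-, x, y, hx, -, -⟩
      exact ⟨x, hx⟩
    have hT_ne : T.Nonempty := by
      obtain ⟨z, hz⟩ := hΩc.nonempty
      obtain ⟨ε, hε, hball⟩ := Metric.isOpen_iff.1 hΩo z hz
      obtain ⟨v, hv⟩ := exists_norm_eq (EuclideanSpace ℝ (Fin n)) (le_of_lt (half_pos hε))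
      refine ⟨ε / 4, by linarith, z, z + v, (ball_subset_ball (by linarith)).trans hball,
        ?_, ball_disjoint_ball ?_⟩
      · intro w hw
        apply hball
        rw [mem_ball] at hw ⊢
        have hd : dist (z + v) z = ε / 2 := by rw [dist_self_add_left, hv]
        calc dist w z ≤ dist w (z + v) + dist (z + v) z := dist_triangle _ _ _
          _ < ε / 4 + ε / 2 := by linarith
          _ < ε := by linarith
      · rw [dist_comm, dist_self_add_left, hv]; linarith
    have h𝔕pos : 0 < twoBallRadius Ω := by
      obtain ⟨r0, hr0⟩ := hT_ne
      exact lt_of_lt_of_le hr0.1 (le_csSup hT_bdd hr0)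
    -- every element of P is ≥ 1/𝔕
    have hlow : ∀ x ∈ P, 1 / twoBallRadius Ω ≤ x := by
      rintro x ⟨⟨ω1, ω2⟩, ⟨ho1, ho2, hc1, hc2, hs1, hs2, hd⟩, rfl⟩
      have h1 : 0 < inradius ω1 := hirpos ω1 hs1 ho1 hc1.nonempty
      have h2 : 0 < inradius ω2 := hirpos ω2 hs2 ho2 hc2.nonempty
      set m := min (inradius ω1) (inradius ω2) with hm
      have hmpos : 0 < m := lt_min h1 h2
      have hm𝔕 : m ≤ twoBallRadius Ω := by
        by_contra hcon
        push_neg at hcon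
        set r := (twoBallRadius Ω + m) / 2 with hr
        have hr1 : twoBallRadius Ω < r := by rw [hr]; linarith
        have hr2 : r < m := by rw [hr]; linarith
        have hrpos : 0 < r := lt_trans h𝔕pos hr1
        obtain ⟨x1, hx1⟩ := exists_ball_of_lt_inradius (lt_of_lt_of_le hr2 (min_le_left _ _))
        obtain ⟨x2, hx2⟩ := exists_ball_of_lt_inradius (lt_of_lt_of_le hr2 (min_le_right _ _))
        have hrT : r ∈ T :=
          ⟨hrpos, x1, x2, hx1.trans hs1, hx2.trans hs2, hd.mono hx1 hx2⟩
        exact absurd (le_csSup hT_bdd hrT) (not_le.2 hr1)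
      have hstep : 1 / twoBallRadius Ω ≤ 1 / m := one_div_le_one_div_of_le hmpos hm𝔕
      refine hstep.trans ?_
      rcases le_total (inradius ω1) (inradius ω2) with h | h
      · rw [hm, min_eq_left h]; exact le_max_left _ _
      · rw [hm, min_eq_right h]; exact le_max_right _ _
    -- a partition coming from an element of T, and the upper bound
    have hmemP : ∀ r ∈ T, ∃ x ∈ P, x ≤ 1 / r := by
      rintro r ⟨hrpos, x, y, hx, hy, hdxy⟩
      refine ⟨max ((1:ℝ) / inradius (ball x r)) (1 / inradius (ball y r)),
        ⟨(ball x r, ball y r), ⟨isOpen_ball, isOpen_ball,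
          (convex_ball x r).isConnected (nonempty_ball.2 hrpos),
          (convex_ball y r).isConnected (nonempty_ball.2 hrpos),
          hx, hy, hdxy⟩, rfl⟩, ?_⟩
      refine max_le (one_div_le_one_div_of_le hrpos (hir_ge x r hx))
        (one_div_le_one_div_of_le hrpos (hir_ge y r hy))
    have hP_ne : P.Nonempty := by
      obtain ⟨r0, hr0⟩ := hT_ne
      obtain ⟨x0, hx0, -⟩ := hmemP r0 hr0
      exact ⟨x0, hx0⟩
    have hP_bdd : BddBelow P := ⟨1 / twoBallRadius Ω, hlow⟩
    have hge : 1 / twoBallRadius Ω ≤ sInf P := le_csInf hP_ne hlow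
    have hsinfpos : 0 < sInf P := lt_of_lt_of_le (one_div_pos.2 h𝔕pos) hge
    have hle : sInf P ≤ 1 / twoBallRadius Ω := by
      have hstep : ∀ r ∈ T, r ≤ 1 / sInf P := by
        intro r hr
        obtain ⟨x0, hx0, hx0le⟩ := hmemP r hr
        have h1 : sInf P ≤ 1 / r := (csInf_le hP_bdd hx0).trans hx0le
        have h2 : 1 / (1 / r) ≤ 1 / sInf P := one_div_le_one_div_of_le hsinfpos h1
        rwa [one_div_one_div] at h2
      have h𝔕le : twoBallRadius Ω ≤ 1 / sInf P := csSup_le hT_ne hstep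
      have := one_div_le_one_div_of_le h𝔕pos h𝔕le
      rwa [one_div_one_div] at this
    rw [hcInf]
    exact le_antisymm hle hge
end

section
/- Let Ω = (0,1)² and K = {(r_1, r_2) : r_1, r_2 ∈ (0, 1/2], r_1 + r_2 ≤ √2/(1+√2)}. For 0 < t ≤ (2√2)/(1+√2) - 1, one has inf_{(r_1,r_2) ∈ K} max{t/r_1, 1/r_2} = 2, attained at r_2 = 1/2 and r_1 = t/2 (note t/2 ≤ √2/(1+√2) - 1/2). Hence the ∞-Fučík curve of the unit square coincides with the trivial line β = 2 for these values of t. -/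
/-- For the unit square and `0 < t ≤ 2√2/(1+√2) - 1`, the infimum over
`K = {(r₁,r₂) : r₁, r₂ ∈ (0,1/2], r₁ + r₂ ≤ √2/(1+√2)}` of `max (t/r₁) (1/r₂)` equals `2`,
attained at `r₁ = t/2`, `r₂ = 1/2` (note `t/2 ≤ √2/(1+√2) - 1/2`): the ∞-Fučík curve of the
unit square coincides with the trivial line `β = 2` for these `t`. -/
theorem stmt_18 (t : ℝ) (ht : 0 < t) (ht0 : t ≤ 2 * Real.sqrt 2 / (1 + Real.sqrt 2) - 1) :
    sInf {x : ℝ | ∃ r₁ r₂ : ℝ, 0 < r₁ ∧ r₁ ≤ 1 / 2 ∧ 0 < r₂ ∧ r₂ ≤ 1 / 2 ∧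
        r₁ + r₂ ≤ Real.sqrt 2 / (1 + Real.sqrt 2) ∧ x = max (t / r₁) (1 / r₂)} = 2 ∧
    t / 2 ≤ Real.sqrt 2 / (1 + Real.sqrt 2) - 1 / 2 ∧
    max (t / (t / 2)) (1 / (1 / 2 : ℝ)) = 2 := by
  have hs2 : Real.sqrt 2 ^ 2 = 2 := Real.sq_sqrt (by norm_num)
  have hs2pos : (0:ℝ) < Real.sqrt 2 := Real.sqrt_pos.mpr (by norm_num)
  have hden : (0:ℝ) < 1 + Real.sqrt 2 := by linarith
  have key1 : Real.sqrt 2 / (1 + Real.sqrt 2) = 2 - Real.sqrt 2 := by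
    field_simp
    nlinarith [hs2]
  have key2 : 2 * Real.sqrt 2 / (1 + Real.sqrt 2) = 4 - 2 * Real.sqrt 2 := by
    field_simp
    nlinarith [hs2]
  rw [key2] at ht0
  have hsle : Real.sqrt 2 ≤ 3/2 := by nlinarith [hs2, hs2pos]
  have hsge : (1:ℝ) ≤ Real.sqrt 2 := by nlinarith [hs2, hs2pos]
  have ht1 : t ≤ 1 := by linarith
  have htt : t / (t / 2) = 2 := by rw [div_div_eq_mul_div]; field_simp
  have hmem : (2:ℝ) ∈ {x : ℝ | ∃ r₁ r₂ : ℝ, 0 < r₁ ∧ r₁ ≤ 1 / 2 ∧ 0 < r₂ ∧ r₂ ≤ 1 / 2 ∧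
      r₁ + r₂ ≤ Real.sqrt 2 / (1 + Real.sqrt 2) ∧ x = max (t / r₁) (1 / r₂)} := by
    refine ⟨t / 2, 1 / 2, by linarith, by linarith, by norm_num, le_refl _, ?_, ?_⟩
    · rw [key1]; linarith
    · rw [htt]; norm_num
  refine ⟨le_antisymm (csInf_le ⟨2, ?_⟩ hmem) (le_csInf ⟨2, hmem⟩ ?_), ?_, by rw [htt]; norm_num⟩
  · rintro x ⟨r₁, r₂, hr₁, _, hr₂, hr₂', _, rfl⟩
    exact le_max_of_le_right ((le_div_iff₀ hr₂).mpr (by linarith))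
  · rintro x ⟨r₁, r₂, hr₁, _, hr₂, hr₂', _, rfl⟩
    exact le_max_of_le_right ((le_div_iff₀ hr₂).mpr (by linarith))
  · rw [key1]; linarith
end
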